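/- arXiv:1304.8083 — 3 statements merged into one kernel-verified Lean document; each statement's English description precedes it below -/
import Mathlib

section
/- Let L : N -> R with L(t) >= 0 for all t, let u, ustar : N -> R, let K be a real number and V > 0 a real number, and suppose that L(t+1) - L(t) - V * u(t) <= K - V * ustar(t) for all t. Then for every integer T >= 1, (1/T) * sum_{t=0}^{T-1} u(t) >= (1/T) * sum_{t=0}^{T-1} ustar(t) - K/V - L(0)/(V*T). -/
/-! Summing the drift-plus-penalty inequality over `t < T` telescopes the drift to
`L T - L 0 ≥ -L 0`; dividing by `V * T` gives the bound. -/

open Finset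

theorem sub_le_sum_range_of_forall_succ_sub_le {M : Type*} [AddCommGroup M] [PartialOrder M]
    [IsOrderedAddMonoid M] {L a : ℕ → M} (h : ∀ t, L (t + 1) - L t ≤ a t) (T : ℕ) :
    L T - L 0 ≤ ∑ t ∈ range T, a t := by
  rw [← sum_range_sub]
  exact sum_le_sum fun t _ => h t

open Finset in
theorem drift_plus_penalty_comparison (L u ustar : ℕ → ℝ) (hL : ∀ t, 0 ≤ L t)
    (K V : ℝ) (hV : 0 < V)
    (hdpp : ∀ t, L (t + 1) - L t - V * u t ≤ K - V * ustar t) :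
    ∀ T : ℕ, 1 ≤ T →
      (1 / (T : ℝ)) * ∑ t ∈ Finset.range T, u t
        ≥ (1 / (T : ℝ)) * ∑ t ∈ Finset.range T, ustar t - K / V - L 0 / (V * T) := by
  intro T hT
  have hVT : 0 < V * T := mul_pos hV (by exact_mod_cast hT)
  have htel : L T - L 0 ≤ ∑ t ∈ range T, (K + V * u t - V * ustar t) :=
    sub_le_sum_range_of_forall_succ_sub_le (fun t => by linarith [hdpp t]) T
  have hsum : V * ∑ t ∈ range T, ustar t - T * K - L 0 ≤ V * ∑ t ∈ range T, u t := by
    simp only [sum_sub_distrib, sum_add_distrib, sum_const, card_range, nsmul_eq_mul,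
      ← mul_sum] at htel
    linarith [hL T]
  calc (1 / (T : ℝ)) * ∑ t ∈ range T, ustar t - K / V - L 0 / (V * T)
      = (V * ∑ t ∈ range T, ustar t - T * K - L 0) / (V * T) := by
        field_simp
    _ ≤ (V * ∑ t ∈ range T, u t) / (V * T) := div_le_div_of_nonneg_right hsum hVT.le
    _ = (1 / (T : ℝ)) * ∑ t ∈ range T, u t := by
        field_simp
end

section
/- Let n be a natural number, kappa >= 0 a real number, s and T natural numbers, and let x : N -> Fin n -> R and a : N -> Fin n -> R be such that |x_i(t+1) - x_i(t)| <= kappa for all i and t, and |a_i(tau)| <= 2*kappa for all i and tau. Then sum_{tau=s}^{s+T-1} sum_{i} a_i(tau) * x_i(tau) <= sum_{i} ( sum_{tau=s}^{s+T-1} a_i(tau) ) * x_i(s) + kappa^2 * n * T * (T-1). -/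
/-!
After `k` slots of the frame, `x i` has drifted at most `k * kappa` from its value at the start,
so replacing `x (s + k) i` by `x s i` costs at most `n * (2 * kappa) * (k * kappa)` in slot `k`;
summing over `k < T` gives `kappa ^ 2 * n * T * (T - 1)`.
-/

open Finset

theorem dist_le_mul_of_dist_succ_le {α : Type*} [PseudoMetricSpace α] {f : ℕ → α} {κ : ℝ}
    (hf : ∀ t, dist (f t) (f (t + 1)) ≤ κ) (s t : ℕ) : dist (f s) (f (s + t)) ≤ t * κ := by
  simpa using dist_le_Ico_sum_of_dist_le (f := f) (Nat.le_add_right s t) fun _ _ => hf _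

theorem sum_mul_le_sum_mul_add {ι : Type*} [Fintype ι] {a x y : ι → ℝ} {A B : ℝ}
    (ha : ∀ i, |a i| ≤ A) (hxy : ∀ i, |x i - y i| ≤ B) :
    ∑ i, a i * x i ≤ ∑ i, a i * y i + Fintype.card ι * (A * B) := by
  have hterm : ∀ i, a i * x i - a i * y i ≤ A * B := fun i =>
    calc a i * x i - a i * y i ≤ |a i| * |x i - y i| := by
          rw [← abs_mul, mul_sub]; exact le_abs_self _
      _ ≤ A * B := mul_le_mul (ha i) (hxy i) (abs_nonneg _) ((abs_nonneg _).trans (ha i))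
  rw [← sub_le_iff_le_add', ← sum_sub_distrib]
  simpa using sum_le_sum fun i (_ : i ∈ univ) => hterm i

theorem sum_range_natCast_mul_two (T : ℕ) : (∑ k ∈ range T, (k : ℝ)) * 2 = T * (T - 1) := by
  induction T with
  | zero => simp
  | succ T ih => rw [sum_range_succ, add_mul, ih]; push_cast; ring

open Finset in
theorem frame_summation_bound_general (n : ℕ) (kappa : ℝ) (s T : ℕ)
    (x a : ℕ → Fin n → ℝ)
    (hx : ∀ i t, |x (t + 1) i - x t i| ≤ kappa)
    (ha : ∀ i tau, |a tau i| ≤ 2 * kappa) :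
    ∑ tau ∈ Finset.Ico s (s + T), ∑ i, a tau i * x tau i
      ≤ ∑ i, (∑ tau ∈ Finset.Ico s (s + T), a tau i) * x s i
        + kappa ^ 2 * n * T * (T - 1) := by
  have hdrift : ∀ i k, |x (s + k) i - x s i| ≤ k * kappa := fun i k => by
    simpa [Real.dist_eq, abs_sub_comm] using
      dist_le_mul_of_dist_succ_le (f := fun t => x t i) (fun t => by
        simpa [Real.dist_eq, abs_sub_comm] using hx i t) s k
  have hframe : ∀ k ∈ range T, ∑ i, a (s + k) i * x (s + k) i
      ≤ ∑ i, a (s + k) i * x s i + k * (2 * kappa ^ 2 * n) := fun k _ => by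
    have hslot := sum_mul_le_sum_mul_add (fun i => ha i (s + k)) (hdrift · k)
    simp only [Fintype.card_fin] at hslot
    linarith
  simp only [sum_Ico_eq_sum_range, add_tsub_cancel_left]
  calc _ ≤ ∑ k ∈ range T, (∑ i, a (s + k) i * x s i + k * (2 * kappa ^ 2 * n)) :=
        sum_le_sum hframe
    _ = _ := by
      rw [sum_add_distrib, sum_comm, ← sum_mul]
      congr 1
      · simp_rw [sum_mul]
      · linear_combination kappa ^ 2 * n * sum_range_natCast_mul_two T

open Finset in
theorem frame_summation_bound (n : ℕ) (kappa : ℝ) (hkappa : 0 ≤ kappa) (s T : ℕ)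
    (x a : ℕ → Fin n → ℝ)
    (hx : ∀ i t, |x (t + 1) i - x t i| ≤ kappa)
    (ha : ∀ i tau, |a tau i| ≤ 2 * kappa) :
    ∑ tau ∈ Finset.Ico s (s + T), ∑ i, a tau i * x tau i
      ≤ ∑ i, (∑ tau ∈ Finset.Ico s (s + T), a tau i) * x s i
        + kappa ^ 2 * n * T * (T - 1) :=
  frame_summation_bound_general n kappa s T x a hx ha
end

section
/- Let Theta : N -> R with Theta(t) >= 0 for all t, and suppose there is a real kappa >= 0 with |Theta(t+1) - Theta(t)| <= kappa for all t, and that limsup_{t -> infinity} (1/t) * sum_{tau=0}^{t-1} Theta(tau) < infinity. Then lim_{t -> infinity} Theta(t)/t = 0. -/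
/-!
A queue whose one-slot changes are bounded by `κ` cannot drop from height `x` to `0` in fewer
than about `x / κ` slots, so a backlog of height `x` at time `t` contributes roughly `x² / κ`
to the cumulative backlog up to time `t + x / κ`. If the time averages stay bounded by `M`,
this forces `x² ≲ κ M t + (M + κ) x`, hence `x = O(√t) = o(t)`.
-/

open Finset Filter Topology

lemma sub_mul_le_of_abs_sub_le {f : ℕ → ℝ} {κ : ℝ} (hf : ∀ t, |f (t + 1) - f t| ≤ κ)
    (t k : ℕ) : f t - κ * k ≤ f (t + k) := by
  induction k with
  | zero => simp
  | succ k ih =>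
    have hstep := (abs_le.mp (hf (t + k))).1
    push_cast
    rw [← add_assoc]
    linarith

lemma natCast_mul_sub_le_sum_range_add {f : ℕ → ℝ} {κ : ℝ} (hκ : 0 ≤ κ)
    (hf : ∀ t, |f (t + 1) - f t| ≤ κ) (t n : ℕ) :
    n * (f t - κ * n) ≤ ∑ k ∈ range n, f (t + k) := by
  calc (n : ℝ) * (f t - κ * n) = ∑ _k ∈ range n, (f t - κ * n) := by
        rw [sum_const, card_range, nsmul_eq_mul]
    _ ≤ ∑ k ∈ range n, f (t + k) := by
      refine sum_le_sum fun k hk => ?_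
      have hkn : κ * k ≤ κ * n :=
        mul_le_mul_of_nonneg_left (by exact_mod_cast (mem_range.mp hk).le) hκ
      linarith [sub_mul_le_of_abs_sub_le hf t k]

lemma sq_le_of_forall_natCast_mul_sub_le {x κ M t : ℝ} (hx : 0 ≤ x) (hκ : 0 < κ) (hM : 0 ≤ M)
    (h : ∀ n : ℕ, n * (x - κ * n) ≤ M * (t + n)) :
    x ^ 2 ≤ (2 * M + 2 * κ) * x + 4 * κ * M * t := by
  -- Test the hypothesis at the time `n ≈ x / (2κ)` the queue needs to halve.
  set n := ⌊x / (2 * κ)⌋₊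
  have hn_le : 2 * κ * n ≤ x := by
    have := Nat.floor_le (div_nonneg hx (by positivity : (0 : ℝ) ≤ 2 * κ))
    rwa [le_div_iff₀ (by positivity), mul_comm] at this
  have hn_gt : x < 2 * κ * (n + 1) := by
    have := Nat.lt_floor_add_one (x / (2 * κ))
    rwa [div_lt_iff₀ (by positivity), mul_comm] at this
  have hnx : n * x ≤ 2 * M * (t + n) := by
    have hhalf : n * x / 2 ≤ n * (x - κ * n) := by nlinarith [Nat.cast_nonneg (α := ℝ) n]
    linarith [h n]
  calc x ^ 2 ≤ x * (2 * κ * (n + 1)) := by rw [sq]; exact mul_le_mul_of_nonneg_left hn_gt.le hx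
    _ = 2 * κ * (n * x) + 2 * κ * x := by ring
    _ ≤ 2 * κ * (2 * M * (t + n)) + 2 * κ * x := by gcongr
    _ = 4 * κ * M * t + 2 * M * (2 * κ * n) + 2 * κ * x := by ring
    _ ≤ 4 * κ * M * t + 2 * M * x + 2 * κ * x := by gcongr
    _ = (2 * M + 2 * κ) * x + 4 * κ * M * t := by ring

lemma sq_le_of_sum_range_le {f : ℕ → ℝ} {κ M : ℝ} (hf0 : ∀ t, 0 ≤ f t) (hκ : 0 < κ)
    (hM : 0 ≤ M) (hf : ∀ t, |f (t + 1) - f t| ≤ κ) {t₀ : ℕ}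
    (hS : ∀ s ≥ t₀, ∑ τ ∈ range s, f τ ≤ M * s) {t : ℕ} (ht : t₀ ≤ t) :
    f t ^ 2 ≤ (2 * M + 2 * κ) * f t + 4 * κ * M * t := by
  refine sq_le_of_forall_natCast_mul_sub_le (hf0 t) hκ hM fun n => ?_
  have hsplit := sum_range_add f t n
  have hprefix : 0 ≤ ∑ τ ∈ range t, f τ := sum_nonneg fun τ _ => hf0 τ
  have hS' := hS (t + n) (ht.trans (Nat.le_add_right t n))
  push_cast at hS'
  linarith [natCast_mul_sub_le_sum_range_add hκ.le hf t n]

lemma exists_sum_range_le_of_isBoundedUnder {f : ℕ → ℝ}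
    (h : IsBoundedUnder (· ≤ ·) atTop fun t : ℕ => (1 / (t : ℝ)) * ∑ τ ∈ range t, f τ) :
    ∃ M, 0 ≤ M ∧ ∃ t₀, ∀ t ≥ t₀, ∑ τ ∈ range t, f τ ≤ M * t := by
  obtain ⟨M, hM⟩ := h
  obtain ⟨t₁, hM⟩ := eventually_atTop.mp (eventually_map.mp hM)
  refine ⟨max M 0, le_max_right M 0, max t₁ 1, fun t ht => ?_⟩
  have htpos : (0 : ℝ) < t := by exact_mod_cast (le_max_right t₁ 1).trans ht
  have hM' := hM t ((le_max_left t₁ 1).trans ht)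
  rw [one_div, inv_mul_le_iff₀ htpos, mul_comm] at hM'
  exact hM'.trans (mul_le_mul_of_nonneg_right (le_max_left M 0) htpos.le)

lemma tendsto_div_natCast_atTop_zero_of_sq_le {x : ℕ → ℝ} {A B : ℝ} (hx : ∀ t, 0 ≤ x t)
    (hB : 0 ≤ B) (h : ∀ᶠ t in atTop, x t ^ 2 ≤ A * x t + B * t) :
    Tendsto (fun t => x t / t) atTop (𝓝 0) := by
  refine tendsto_order.2 ⟨fun a ha => .of_forall fun t => ha.trans_le ?_, fun ε hε => ?_⟩
  · exact div_nonneg (hx t) t.cast_nonneg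
  have hlarge := tendsto_natCast_atTop_atTop (R := ℝ).eventually_gt_atTop ((A + B / ε) / ε)
  filter_upwards [h, hlarge, eventually_gt_atTop 0] with t hsq ht ht0
  have htpos : (0 : ℝ) < t := Nat.cast_pos.mpr ht0
  rw [div_lt_iff₀ htpos]
  by_contra! hge
  have hxpos : 0 < x t := (mul_pos hε htpos).trans_le hge
  have hBt : B * t ≤ B / ε * x t := by
    rw [div_mul_eq_mul_div, le_div_iff₀ hε, mul_assoc, mul_comm (t : ℝ)]
    exact mul_le_mul_of_nonneg_left hge hB
  have hxle : x t ≤ A + B / ε := by nlinarith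
  rw [div_lt_iff₀ hε] at ht
  linarith

open Finset Filter in
theorem strong_stability_implies_rate_stability_general (Theta : ℕ → ℝ)
    (hpos : ∀ t, 0 ≤ Theta t) (kappa : ℝ)
    (hinc : ∀ t, |Theta (t + 1) - Theta t| ≤ kappa)
    (hbdd : Filter.IsBoundedUnder (· ≤ ·) Filter.atTop
      (fun t : ℕ => (1 / (t : ℝ)) * ∑ tau ∈ Finset.range t, Theta tau)) :
    Filter.Tendsto (fun t : ℕ => Theta t / t) Filter.atTop (nhds 0) := by
  obtain ⟨M, hM, t₀, hS⟩ := exists_sum_range_le_of_isBoundedUnder hbdd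
  -- Enlarging `κ` makes it positive, as needed for the time scale `x / (2κ)`.
  have hinc' : ∀ t, |Theta (t + 1) - Theta t| ≤ kappa + 1 :=
    fun t => (hinc t).trans (le_add_of_nonneg_right zero_le_one)
  have hκ : 0 < kappa + 1 := by linarith [(abs_nonneg _).trans (hinc 0)]
  have hsq : ∀ᶠ t in atTop,
      Theta t ^ 2 ≤ (2 * M + 2 * (kappa + 1)) * Theta t + 4 * (kappa + 1) * M * t :=
    eventually_atTop.mpr ⟨t₀, fun t ht => sq_le_of_sum_range_le hpos hκ hM hinc' hS ht⟩
  exact tendsto_div_natCast_atTop_zero_of_sq_le hpos (by positivity) hsq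

open Finset Filter in
theorem strong_stability_implies_rate_stability (Theta : ℕ → ℝ)
    (hpos : ∀ t, 0 ≤ Theta t) (kappa : ℝ) (hkappa : 0 ≤ kappa)
    (hinc : ∀ t, |Theta (t + 1) - Theta t| ≤ kappa)
    (hbdd : Filter.IsBoundedUnder (· ≤ ·) Filter.atTop
      (fun t : ℕ => (1 / (t : ℝ)) * ∑ tau ∈ Finset.range t, Theta tau)) :
    Filter.Tendsto (fun t : ℕ => Theta t / t) Filter.atTop (nhds 0) :=
  strong_stability_implies_rate_stability_general Theta hpos kappa hinc hbdd
end
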